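/- The function ρ(m, s) = (m - M)·Φ((m - M)/s) + s·φ((m - M)/s) is strictly positive for all m ∈ ℝ and s > 0, where Φ and φ are the standard normal CDF and PDF. -/

import Mathlib

noncomputable def stdPdf (u : ℝ) : ℝ := Real.exp (-u ^ 2 / 2) / Real.sqrt (2 * Real.pi)

noncomputable def stdCdf (t : ℝ) : ℝ := ∫ u in Set.Iic t, stdPdf u

/-! With z = (m - M) / s the quantity is s · (z Φ(z) + φ(z)). Since φ' = -u φ, integrating
u φ(u) over (-∞, z] gives -φ(z), so z Φ(z) + φ(z) = ∫_{-∞}^z (z - u) φ(u) du: the integral of a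
positive function over a half-line. -/

open MeasureTheory ProbabilityTheory Set Filter Topology

lemma stdPdf_eq_gaussianPDFReal : stdPdf = gaussianPDFReal 0 1 := by
  ext u
  simp [stdPdf, gaussianPDFReal, div_eq_inv_mul]

lemma stdPdf_pos (u : ℝ) : 0 < stdPdf u := by
  unfold stdPdf; positivity

lemma integrable_stdPdf : Integrable stdPdf :=
  stdPdf_eq_gaussianPDFReal ▸ integrable_gaussianPDFReal 0 1

lemma integrable_mul_stdPdf : Integrable fun u ↦ u * stdPdf u := by
  refine ((integrable_rpow_mul_exp_neg_mul_sq (b := 1 / 2) (by norm_num) (s := 1)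
    (by norm_num)).mul_const (√(2 * Real.pi))⁻¹).congr (ae_of_all _ fun u ↦ ?_)
  simp only [Real.rpow_one, stdPdf]
  ring_nf

lemma hasDerivAt_stdPdf (u : ℝ) : HasDerivAt stdPdf (-(u * stdPdf u)) u := by
  have h : HasDerivAt stdPdf _ u :=
    ((hasDerivAt_pow 2 u).neg.div_const 2).exp.div_const (√(2 * Real.pi))
  convert h using 1
  simp only [stdPdf, Pi.neg_apply]
  ring

lemma tendsto_stdPdf_atBot : Tendsto stdPdf atBot (𝓝 0) :=
  tendsto_zero_of_hasDerivAt_of_integrableOn_Iic (a := 0) (fun u _ ↦ hasDerivAt_stdPdf u)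
    integrable_mul_stdPdf.neg.integrableOn integrable_stdPdf.integrableOn

lemma integral_Iic_mul_stdPdf (z : ℝ) : ∫ u in Iic z, u * stdPdf u = -stdPdf z := by
  simpa using integral_Iic_of_hasDerivAt_of_tendsto' (f := fun u ↦ -stdPdf u)
    (fun u _ ↦ by simpa using (hasDerivAt_stdPdf u).fun_neg)
    integrable_mul_stdPdf.integrableOn tendsto_stdPdf_atBot.neg

lemma integrable_sub_mul_stdPdf (z : ℝ) : Integrable fun u ↦ (z - u) * stdPdf u := by
  simpa only [sub_mul, Pi.sub_def] using (integrable_stdPdf.const_mul z).sub integrable_mul_stdPdf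

lemma integral_Iic_sub_mul_stdPdf (z : ℝ) :
    ∫ u in Iic z, (z - u) * stdPdf u = z * stdCdf z + stdPdf z := by
  simp_rw [sub_mul]
  rw [integral_sub (integrable_stdPdf.const_mul z).integrableOn integrable_mul_stdPdf.integrableOn,
    integral_const_mul, integral_Iic_mul_stdPdf, stdCdf, sub_neg_eq_add]

lemma mul_stdCdf_add_stdPdf_pos (z : ℝ) : 0 < z * stdCdf z + stdPdf z := by
  have hpos : ∀ u ∈ Iio z, 0 < (z - u) * stdPdf u :=
    fun u hu ↦ mul_pos (sub_pos.2 hu) (stdPdf_pos u)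
  rw [← integral_Iic_sub_mul_stdPdf, integral_Iic_eq_integral_Iio,
    setIntegral_pos_iff_support_of_nonneg_ae
      ((ae_restrict_iff' measurableSet_Iio).2 (ae_of_all _ fun u hu ↦ (hpos u hu).le))
      (integrable_sub_mul_stdPdf z).integrableOn,
    inter_eq_right.2 fun u hu ↦ Function.mem_support.2 (hpos u hu).ne', Real.volume_Iio]
  exact ENNReal.zero_lt_top

theorem expected_improvement_pos (M : ℝ) :
    ∀ (m : ℝ) (s : ℝ), 0 < s →
      0 < (m - M) * stdCdf ((m - M) / s) + s * stdPdf ((m - M) / s) := by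
  intro m s hs
  have hscale : (m - M) * stdCdf ((m - M) / s) + s * stdPdf ((m - M) / s)
      = s * ((m - M) / s * stdCdf ((m - M) / s) + stdPdf ((m - M) / s)) := by
    field_simp
  rw [hscale]
  exact mul_pos hs (mul_stdCdf_add_stdPdf_pos _)
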